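/- arXiv:2112.10875 — 4 statements merged into one kernel-verified Lean document; each statement's English description precedes it below -/
import Mathlib

section
/- Let G=(V,E) be a DAG with vertices topologically ordered (i→j∈E implies i<j), let Λ∈ℝ^E, let Ω⁽³⁾ be a diagonal symmetric tensor, and let T=T(Λ,Ω⁽³⁾) be the associated Tucker-product tensor. Then for all i≤j<r: T_{ijr} = Σ_{l∈pa(r)} λ_{lr}·T_{ijl}; for all i<r: T_{irr} = Σ_{l₁,l₂∈pa(r)} λ_{l₁r}λ_{l₂r}·T_{il₁l₂}; and for all r: T_{rrr} = Σ_{l₁,l₂,l₃∈pa(r)} λ_{l₁r}λ_{l₂r}λ_{l₃r}·T_{l₁l₂l₃} + Ω⁽³⁾_{rrr}, where pa(r)={l : (l,r)∈E}. -/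
open Matrix Finset

/-- Recursive structure of the Tucker-product third-moment tensor of a
topologically ordered DAG: for `i ≤ j < r`, `T_{ijr} = Σ_{l ∈ pa(r)} λ_{lr} T_{ijl}`; for
`i < r`, `T_{irr} = Σ_{l₁,l₂ ∈ pa(r)} λ_{l₁r} λ_{l₂r} T_{il₁l₂}`; and
`T_{rrr} = Σ_{l₁,l₂,l₃ ∈ pa(r)} λ_{l₁r} λ_{l₂r} λ_{l₃r} T_{l₁l₂l₃} + Ω⁽³⁾_{rrr}`. -/
theorem tucker_tensor_recursion (n : ℕ) (E : Fin n → Fin n → Prop) [DecidableRel E]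
    (hE : ∀ i j : Fin n, E i j → i < j)
    (Λ : Matrix (Fin n) (Fin n) ℝ) (hΛ : ∀ i j, ¬ E i j → Λ i j = 0)
    (ω3 : Fin n → ℝ) (T : Fin n → Fin n → Fin n → ℝ)
    (hT : ∀ i j k, T i j k =
      ∑ a, ω3 a * (1 - Λ)⁻¹ a i * (1 - Λ)⁻¹ a j * (1 - Λ)⁻¹ a k) :
    (∀ i j r : Fin n, i ≤ j → j < r →
      T i j r = ∑ l ∈ Finset.univ.filter (fun l => E l r), Λ l r * T i j l) ∧
    (∀ i r : Fin n, i < r →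
      T i r r = ∑ l₁ ∈ Finset.univ.filter (fun l => E l r),
        ∑ l₂ ∈ Finset.univ.filter (fun l => E l r), Λ l₁ r * Λ l₂ r * T i l₁ l₂) ∧
    (∀ r : Fin n,
      T r r r = (∑ l₁ ∈ Finset.univ.filter (fun l => E l r),
        ∑ l₂ ∈ Finset.univ.filter (fun l => E l r),
          ∑ l₃ ∈ Finset.univ.filter (fun l => E l r),
            Λ l₁ r * Λ l₂ r * Λ l₃ r * T l₁ l₂ l₃) + ω3 r) := by
  -- zero pattern of Λ
  have hΛ0 : ∀ i j : Fin n, ¬ i < j → Λ i j = 0 := fun i j h =>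
    hΛ i j (fun hij => h (hE i j hij))
  -- 1 - Λ is upper triangular
  have htri : (1 - Λ).BlockTriangular id := by
    intro i j hij
    have h : j < i := hij
    simp [Matrix.sub_apply, Matrix.one_apply, hΛ0 i j (not_lt_of_gt h), h.ne']
  have hdet : (1 - Λ).det = 1 := by
    rw [det_of_upperTriangular htri]
    apply Finset.prod_eq_one
    intro i _
    simp [Matrix.sub_apply, hΛ0 i i (lt_irrefl i)]
  have hunit : IsUnit (1 - Λ).det := by rw [hdet]; exact isUnit_one
  haveI : Invertible (1 - Λ) := (1 - Λ).invertibleOfIsUnitDet hunit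
  set M : Matrix (Fin n) (Fin n) ℝ := (1 - Λ)⁻¹ with hMdef
  -- M is upper triangular
  have hMtri : M.BlockTriangular id := blockTriangular_inv_of_blockTriangular htri
  have hM0 : ∀ a b : Fin n, b < a → M a b = 0 := fun a b h => hMtri h
  -- recursion for M
  have hMrec : ∀ a r : Fin n,
      M a r = (if a = r then (1:ℝ) else 0) + ∑ l, Λ l r * M a l := by
    intro a r
    have h1 : M * (1 - Λ) = 1 := Matrix.nonsing_inv_mul _ hunit
    have h2 := congrFun (congrFun h1 a) r
    simp only [Matrix.mul_apply, Matrix.sub_apply, Matrix.one_apply] at h2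
    have h3 : ∑ x, M a x * ((if x = r then (1:ℝ) else 0) - Λ x r)
        = ∑ x, (M a x * (if x = r then (1:ℝ) else 0) - M a x * Λ x r) := by
      apply Finset.sum_congr rfl; intro x _; ring
    rw [h3, Finset.sum_sub_distrib] at h2
    simp only [mul_ite, mul_one, mul_zero, Finset.sum_ite_eq', Finset.mem_univ,
      if_true] at h2
    have := sub_eq_iff_eq_add.mp h2
    rw [this]
    congr 1
    apply Finset.sum_congr rfl; intro x _; ring
  set N : Fin n → Fin n → ℝ := fun a r => ∑ l, Λ l r * M a l with hNdef
  have hMrec' : ∀ a r : Fin n, M a r = (if a = r then (1:ℝ) else 0) + N a r :=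
    hMrec
  -- N r r = 0
  have hNrr : ∀ r : Fin n, N r r = 0 := by
    intro r
    apply Finset.sum_eq_zero
    intro l _
    by_cases h : l < r
    · rw [hM0 r l h]; ring
    · rw [hΛ0 l r h]; ring
  -- extend filtered sums to full sums
  have hext : ∀ (r : Fin n) (X : Fin n → ℝ),
      ∑ l ∈ Finset.univ.filter (fun l => E l r), Λ l r * X l
        = ∑ l, Λ l r * X l := by
    intro r X
    refine Finset.sum_subset (Finset.subset_univ _) ?_
    intro l _ hl
    rw [Finset.mem_filter] at hl
    rw [hΛ l r (fun h => hl ⟨Finset.mem_univ l, h⟩)]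
    ring
  refine ⟨?_, ?_, ?_⟩
  · -- statement 1
    intro i j r hij hjr
    have hir : i < r := lt_of_le_of_lt hij hjr
    rw [hext r (fun l => T i j l)]
    have hRHS : ∑ l, Λ l r * T i j l = ∑ a, ω3 a * M a i * M a j * N a r := by
      simp only [hT]
      rw [Finset.sum_congr rfl (fun l _ => Finset.mul_sum Finset.univ
            (fun a => ω3 a * M a i * M a j * M a l) (Λ l r)),
          Finset.sum_comm]
      apply Finset.sum_congr rfl
      intro a _
      simp only [hNdef]
      rw [Finset.mul_sum]
      apply Finset.sum_congr rfl
      intro l _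
      ring
    rw [hRHS, hT]
    have split : ∀ a : Fin n,
        ω3 a * M a i * M a j * M a r
          = ω3 a * M a i * M a j * N a r
            + (if a = r then ω3 a * M a i * M a j else 0) := by
      intro a
      rw [hMrec' a r]
      split_ifs with h <;> ring
    rw [Finset.sum_congr rfl (fun a _ => split a), Finset.sum_add_distrib,
        Finset.sum_ite_eq' Finset.univ r (fun a => ω3 a * M a i * M a j),
        if_pos (Finset.mem_univ r), hM0 r i hir]
    ring
  · -- statement 2
    intro i r hir
    have key : ∀ l₁ : Fin n,
        ∑ l₂ ∈ Finset.univ.filter (fun l => E l r), Λ l₁ r * Λ l₂ r * T i l₁ l₂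
          = ∑ l₂, Λ l₁ r * Λ l₂ r * T i l₁ l₂ := by
      intro l₁
      have := hext r (fun l₂ => Λ l₁ r * T i l₁ l₂)
      calc ∑ l₂ ∈ Finset.univ.filter (fun l => E l r), Λ l₁ r * Λ l₂ r * T i l₁ l₂
          = ∑ l₂ ∈ Finset.univ.filter (fun l => E l r), Λ l₂ r * (Λ l₁ r * T i l₁ l₂) := by
            apply Finset.sum_congr rfl; intro l₂ _; ring
        _ = ∑ l₂, Λ l₂ r * (Λ l₁ r * T i l₁ l₂) := this
        _ = ∑ l₂, Λ l₁ r * Λ l₂ r * T i l₁ l₂ := by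
            apply Finset.sum_congr rfl; intro l₂ _; ring
    have step2 : ∑ l₁ ∈ Finset.univ.filter (fun l => E l r),
          ∑ l₂, Λ l₁ r * Λ l₂ r * T i l₁ l₂
        = ∑ l₁, ∑ l₂, Λ l₁ r * Λ l₂ r * T i l₁ l₂ := by
      have h := hext r (fun l₁ => ∑ l₂, Λ l₂ r * T i l₁ l₂)
      calc ∑ l₁ ∈ Finset.univ.filter (fun l => E l r),
              ∑ l₂, Λ l₁ r * Λ l₂ r * T i l₁ l₂
          = ∑ l₁ ∈ Finset.univ.filter (fun l => E l r),
              Λ l₁ r * ∑ l₂, Λ l₂ r * T i l₁ l₂ := by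
            refine Finset.sum_congr rfl fun l₁ _ => ?_
            rw [Finset.mul_sum]
            exact Finset.sum_congr rfl fun l₂ _ => by ring
        _ = ∑ l₁, Λ l₁ r * ∑ l₂, Λ l₂ r * T i l₁ l₂ := h
        _ = ∑ l₁, ∑ l₂, Λ l₁ r * Λ l₂ r * T i l₁ l₂ := by
            refine Finset.sum_congr rfl fun l₁ _ => ?_
            rw [Finset.mul_sum]
            exact Finset.sum_congr rfl fun l₂ _ => by ring
    rw [Finset.sum_congr rfl (fun l₁ _ => key l₁), step2]
    -- RHS = Σ_a ω3 a * M a i * N a r * N a r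
    have hRHS : ∑ l₁, ∑ l₂, Λ l₁ r * Λ l₂ r * T i l₁ l₂
        = ∑ a, ω3 a * M a i * N a r * N a r := by
      simp only [hT]
      have : ∀ l₁, ∑ l₂, Λ l₁ r * Λ l₂ r * ∑ a, ω3 a * M a i * M a l₁ * M a l₂
          = ∑ a, ∑ l₂, Λ l₁ r * Λ l₂ r * (ω3 a * M a i * M a l₁ * M a l₂) := by
        intro l₁
        rw [Finset.sum_comm]
        apply Finset.sum_congr rfl; intro l₂ _
        rw [Finset.mul_sum]
      rw [Finset.sum_congr rfl (fun l₁ _ => this l₁), Finset.sum_comm]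
      apply Finset.sum_congr rfl
      intro a _
      simp only [hNdef]
      simp only [Finset.mul_sum, Finset.sum_mul]
      refine Finset.sum_congr rfl fun l₁ _ => ?_
      try simp only [Finset.mul_sum, Finset.sum_mul]
      refine Finset.sum_congr rfl fun l₂ _ => ?_
      ring
    rw [hRHS, hT]
    apply Finset.sum_congr rfl
    intro a _
    rw [hMrec' a r]
    by_cases h : a = r
    · subst h
      rw [hM0 a i hir, hNrr]
      ring
    · rw [if_neg h]
      ring
  · -- statement 3
    intro r
    have key2 : ∀ l₁ l₂ : Fin n,
        ∑ l₃ ∈ Finset.univ.filter (fun l => E l r), Λ l₁ r * Λ l₂ r * Λ l₃ r * T l₁ l₂ l₃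
          = ∑ l₃, Λ l₁ r * Λ l₂ r * Λ l₃ r * T l₁ l₂ l₃ := by
      intro l₁ l₂
      have := hext r (fun l₃ => Λ l₁ r * Λ l₂ r * T l₁ l₂ l₃)
      calc ∑ l₃ ∈ Finset.univ.filter (fun l => E l r), Λ l₁ r * Λ l₂ r * Λ l₃ r * T l₁ l₂ l₃
          = ∑ l₃ ∈ Finset.univ.filter (fun l => E l r),
              Λ l₃ r * (Λ l₁ r * Λ l₂ r * T l₁ l₂ l₃) := by
            apply Finset.sum_congr rfl; intro l₃ _; ring
        _ = ∑ l₃, Λ l₃ r * (Λ l₁ r * Λ l₂ r * T l₁ l₂ l₃) := this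
        _ = ∑ l₃, Λ l₁ r * Λ l₂ r * Λ l₃ r * T l₁ l₂ l₃ := by
            apply Finset.sum_congr rfl; intro l₃ _; ring
    have key1 : ∀ l₁ : Fin n,
        ∑ l₂ ∈ Finset.univ.filter (fun l => E l r),
            ∑ l₃, Λ l₁ r * Λ l₂ r * Λ l₃ r * T l₁ l₂ l₃
          = ∑ l₂, ∑ l₃, Λ l₁ r * Λ l₂ r * Λ l₃ r * T l₁ l₂ l₃ := by
      intro l₁
      have := hext r (fun l₂ => ∑ l₃, Λ l₁ r * Λ l₃ r * T l₁ l₂ l₃)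
      calc ∑ l₂ ∈ Finset.univ.filter (fun l => E l r),
              ∑ l₃, Λ l₁ r * Λ l₂ r * Λ l₃ r * T l₁ l₂ l₃
          = ∑ l₂ ∈ Finset.univ.filter (fun l => E l r),
              Λ l₂ r * ∑ l₃, Λ l₁ r * Λ l₃ r * T l₁ l₂ l₃ := by
            apply Finset.sum_congr rfl; intro l₂ _
            rw [Finset.mul_sum]
            apply Finset.sum_congr rfl; intro l₃ _; ring
        _ = ∑ l₂, Λ l₂ r * ∑ l₃, Λ l₁ r * Λ l₃ r * T l₁ l₂ l₃ := this
        _ = ∑ l₂, ∑ l₃, Λ l₁ r * Λ l₂ r * Λ l₃ r * T l₁ l₂ l₃ := by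
            apply Finset.sum_congr rfl; intro l₂ _
            rw [Finset.mul_sum]
            apply Finset.sum_congr rfl; intro l₃ _; ring
    rw [Finset.sum_congr rfl (fun l₁ _ =>
          Finset.sum_congr rfl (fun l₂ _ => key2 l₁ l₂)),
        Finset.sum_congr rfl (fun l₁ _ => key1 l₁)]
    have step3 : ∑ l₁ ∈ Finset.univ.filter (fun l => E l r),
          ∑ l₂, ∑ l₃, Λ l₁ r * Λ l₂ r * Λ l₃ r * T l₁ l₂ l₃
        = ∑ l₁, ∑ l₂, ∑ l₃, Λ l₁ r * Λ l₂ r * Λ l₃ r * T l₁ l₂ l₃ := by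
      have h := hext r (fun l₁ => ∑ l₂, ∑ l₃, Λ l₂ r * Λ l₃ r * T l₁ l₂ l₃)
      calc ∑ l₁ ∈ Finset.univ.filter (fun l => E l r),
              ∑ l₂, ∑ l₃, Λ l₁ r * Λ l₂ r * Λ l₃ r * T l₁ l₂ l₃
          = ∑ l₁ ∈ Finset.univ.filter (fun l => E l r),
              Λ l₁ r * ∑ l₂, ∑ l₃, Λ l₂ r * Λ l₃ r * T l₁ l₂ l₃ := by
            refine Finset.sum_congr rfl fun l₁ _ => ?_
            rw [Finset.mul_sum]
            refine Finset.sum_congr rfl fun l₂ _ => ?_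
            rw [Finset.mul_sum]
            exact Finset.sum_congr rfl fun l₃ _ => by ring
        _ = ∑ l₁, Λ l₁ r * ∑ l₂, ∑ l₃, Λ l₂ r * Λ l₃ r * T l₁ l₂ l₃ := h
        _ = ∑ l₁, ∑ l₂, ∑ l₃, Λ l₁ r * Λ l₂ r * Λ l₃ r * T l₁ l₂ l₃ := by
            refine Finset.sum_congr rfl fun l₁ _ => ?_
            rw [Finset.mul_sum]
            refine Finset.sum_congr rfl fun l₂ _ => ?_
            rw [Finset.mul_sum]
            exact Finset.sum_congr rfl fun l₃ _ => by ring
    rw [step3]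
    have hRHS : ∑ l₁, ∑ l₂, ∑ l₃, Λ l₁ r * Λ l₂ r * Λ l₃ r * T l₁ l₂ l₃
        = ∑ a, ω3 a * N a r * N a r * N a r := by
      simp only [hT]
      -- push sums inside and swap
      have step : ∀ l₁ l₂ : Fin n,
          ∑ l₃, Λ l₁ r * Λ l₂ r * Λ l₃ r * ∑ a, ω3 a * M a l₁ * M a l₂ * M a l₃
            = ∑ a, ∑ l₃, Λ l₁ r * Λ l₂ r * Λ l₃ r * (ω3 a * M a l₁ * M a l₂ * M a l₃) := by
        intro l₁ l₂
        rw [Finset.sum_comm]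
        apply Finset.sum_congr rfl; intro l₃ _
        rw [Finset.mul_sum]
      rw [Finset.sum_congr rfl (fun l₁ _ => Finset.sum_congr rfl (fun l₂ _ => step l₁ l₂))]
      rw [Finset.sum_congr rfl (fun l₁ _ => Finset.sum_comm)]
      rw [Finset.sum_comm]
      apply Finset.sum_congr rfl
      intro a _
      simp only [hNdef]
      simp only [Finset.mul_sum, Finset.sum_mul]
      refine Finset.sum_congr rfl fun l₁ _ => ?_
      try simp only [Finset.mul_sum, Finset.sum_mul]
      refine Finset.sum_congr rfl fun l₂ _ => ?_
      try simp only [Finset.mul_sum, Finset.sum_mul]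
      refine Finset.sum_congr rfl fun l₃ _ => ?_
      ring
    rw [hRHS, hT]
    have split : ∀ a : Fin n,
        ω3 a * M a r * M a r * M a r
          = ω3 a * N a r * N a r * N a r
            + (if a = r then ω3 a * ((1 + N a r)^3 - N a r^3) else 0) := by
      intro a
      rw [hMrec' a r]
      split_ifs with h <;> ring
    rw [Finset.sum_congr rfl (fun a _ => split a), Finset.sum_add_distrib,
        Finset.sum_ite_eq' Finset.univ r
          (fun a => ω3 a * ((1 + N a r)^3 - N a r^3))]
    rw [if_pos (Finset.mem_univ r), hNrr]
    ring
end

section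
/- Let G=(V,E) be a polytree and i,j∈V. If there is no 2-trek between i and j, then the variable s_{ij} belongs to the third-order moment ideal I^{≤3}(G); moreover, for every k∈V such that there is no 3-trek between i, j and k, the variable t_{ijk} belongs to I^{≤3}(G). -/
/-!
Since the edges of `G` increase the vertex order, `Λ` is strictly upper triangular, hence
nilpotent, so `(I - Λ)⁻¹ = ∑ₖ Λᵏ` and its entry `(a, i)` vanishes unless there is a directed
path from `a` to `i`. Every summand of `s_{ij}` (resp. `t_{ijk}`) carries the factors
`[(I - Λ)⁻¹]_{ai}` and `[(I - Λ)⁻¹]_{aj}` (and `[(I - Λ)⁻¹]_{ak}`) for one vertex `a`, so it is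
zero unless `a` is the top of a 2-trek (resp. 3-trek).
-/

open MvPolynomial Matrix Finset

namespace LNG

variable {n : ℕ}

/-- A directed path in the directed graph `E`, recorded as the (nonempty) list of
visited vertices. -/
def IsDiPath (E : Fin n → Fin n → Prop) : List (Fin n) → Prop
  | [] => False
  | [_] => True
  | a :: b :: l => E a b ∧ IsDiPath E (b :: l)

/-- `p` is a directed path from `v` to `i` (possibly of length zero). -/
def IsPathFromTo (E : Fin n → Fin n → Prop) (v : Fin n) (p : List (Fin n)) (i : Fin n) : Prop :=
  IsDiPath E p ∧ p.head? = some v ∧ p.getLast? = some i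

/-- A `k`-trek with top `v` between the vertices `i 0, …, i (k-1)`: an ordered collection
of directed paths with common source `v`, where the `r`-th path has sink `i r`. -/
def IsTrek (E : Fin n → Fin n → Prop) {k : ℕ} (v : Fin n)
    (P : Fin k → List (Fin n)) (i : Fin k → Fin n) : Prop :=
  ∀ r, IsPathFromTo E v (P r) (i r)

/-- A simple `k`-trek: the top is the only vertex lying on all `k` paths. -/
def IsSimpleTrek (E : Fin n → Fin n → Prop) {k : ℕ} (v : Fin n)
    (P : Fin k → List (Fin n)) (i : Fin k → Fin n) : Prop :=
  IsTrek E v P i ∧ ∀ w : Fin n, (∀ r, w ∈ P r) → w = v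

/-- A 2-trek with top `v` between `i` and `j`. -/
def IsTrek2 (E : Fin n → Fin n → Prop) (v : Fin n) (p q : List (Fin n)) (i j : Fin n) : Prop :=
  IsPathFromTo E v p i ∧ IsPathFromTo E v q j

def IsSimpleTrek2 (E : Fin n → Fin n → Prop) (v : Fin n) (p q : List (Fin n))
    (i j : Fin n) : Prop :=
  IsTrek2 E v p q i j ∧ ∀ w : Fin n, w ∈ p → w ∈ q → w = v

/-- A 3-trek with top `v` between `i`, `j` and `k`. -/
def IsTrek3 (E : Fin n → Fin n → Prop) (v : Fin n) (p q r : List (Fin n))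
    (i j k : Fin n) : Prop :=
  IsPathFromTo E v p i ∧ IsPathFromTo E v q j ∧ IsPathFromTo E v r k

def IsSimpleTrek3 (E : Fin n → Fin n → Prop) (v : Fin n) (p q r : List (Fin n))
    (i j k : Fin n) : Prop :=
  IsTrek3 E v p q r i j k ∧ ∀ w : Fin n, w ∈ p → w ∈ q → w ∈ r → w = v

def Trek2Exists (E : Fin n → Fin n → Prop) (i j : Fin n) : Prop :=
  ∃ v p q, IsTrek2 E v p q i j

def Trek3Exists (E : Fin n → Fin n → Prop) (i j k : Fin n) : Prop :=
  ∃ v p q r, IsTrek3 E v p q r i j k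

/-- The underlying undirected (simple) graph of the directed graph `E`. -/
def underlying (E : Fin n → Fin n → Prop) : SimpleGraph (Fin n) where
  Adj a b := a ≠ b ∧ (E a b ∨ E b a)
  symm := ⟨fun a b h => ⟨h.1.symm, h.2.symm⟩⟩
  loopless := ⟨fun a h => h.1 rfl⟩

/-- A polytree: a topologically ordered DAG whose underlying undirected graph is a tree. -/
def IsPolytree (E : Fin n → Fin n → Prop) : Prop :=
  (∀ i j : Fin n, E i j → i < j) ∧ (underlying E).IsTree

/-! ### Variables of the moment polynomial ring -/

abbrev SIdx (n : ℕ) := {p : Fin n × Fin n // p.1 ≤ p.2}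
abbrev TIdx (n : ℕ) := {p : Fin n × Fin n × Fin n // p.1 ≤ p.2.1 ∧ p.2.1 ≤ p.2.2}

/-- Variables `s_{ij}` (`1 ≤ i ≤ j ≤ n`) and `t_{ijk}` (`1 ≤ i ≤ j ≤ k ≤ n`). -/
abbrev MomVar (n : ℕ) := SIdx n ⊕ TIdx n

/-- Parameter variables `a_i`, `b_i` (`i ∈ V`) and `λ_{ij}`. -/
abbrev PVar (n : ℕ) := (Fin n ⊕ Fin n) ⊕ Fin n × Fin n

/-- Median of three. -/
def mid3 (i j k : Fin n) : Fin n := max (min i j) (min (max i j) k)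

lemma min3_le_mid3 (i j k : Fin n) : min i (min j k) ≤ mid3 i j k :=
  le_trans (le_min (min_le_left _ _) (le_trans (min_le_right i (min j k)) (min_le_left j k)))
    (le_max_left _ _)

lemma mid3_le_max3 (i j k : Fin n) : mid3 i j k ≤ max i (max j k) :=
  max_le (le_trans (min_le_left i j) (le_max_left _ _))
    (le_trans (min_le_right (max i j) k) (le_trans (le_max_right j k) (le_max_right i _)))

/-- The variable `s_{ij}` (indices sorted). -/
noncomputable def svar (i j : Fin n) : MvPolynomial (MomVar n) ℝ :=
  X (Sum.inl ⟨(min i j, max i j), min_le_max⟩)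

/-- The variable `t_{ijk}` (indices sorted). -/
noncomputable def tvar (i j k : Fin n) : MvPolynomial (MomVar n) ℝ :=
  X (Sum.inr ⟨(min i (min j k), mid3 i j k, max i (max j k)),
      min3_le_mid3 i j k, mid3_le_max3 i j k⟩)

/-- Evaluation of the moment variables at a concrete pair `(S, T)`. -/
def evalVar (S : Matrix (Fin n) (Fin n) ℝ) (T : Fin n → Fin n → Fin n → ℝ) :
    MomVar n → ℝ
  | Sum.inl p => S p.1.1 p.1.2
  | Sum.inr p => T p.1.1 p.1.2.1 p.1.2.2

/-! ### The third-order moment model -/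

/-- `Λ ∈ ℝ^E`. -/
def Supported (E : Fin n → Fin n → Prop) (Λ : Matrix (Fin n) (Fin n) ℝ) : Prop :=
  ∀ i j, ¬ E i j → Λ i j = 0

/-- Covariance matrix `(I-Λ)^{-T} Ω⁽²⁾ (I-Λ)^{-1}`. -/
noncomputable def momentS (Λ : Matrix (Fin n) (Fin n) ℝ) (ω2 : Fin n → ℝ) :
    Matrix (Fin n) (Fin n) ℝ :=
  ((1 - Λ)⁻¹)ᵀ * Matrix.diagonal ω2 * (1 - Λ)⁻¹

/-- Third moment tensor `Ω⁽³⁾ ∙ (I-Λ)^{-1} ∙ (I-Λ)^{-1} ∙ (I-Λ)^{-1}`. -/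
noncomputable def momentT (Λ : Matrix (Fin n) (Fin n) ℝ) (ω3 : Fin n → ℝ)
    (i j k : Fin n) : ℝ :=
  ∑ a, ω3 a * (1 - Λ)⁻¹ a i * (1 - Λ)⁻¹ a j * (1 - Λ)⁻¹ a k

/-- Membership in the third-order moment model `M^{≤3}(G)`. -/
def MomentModel (E : Fin n → Fin n → Prop)
    (S : Matrix (Fin n) (Fin n) ℝ) (T : Fin n → Fin n → Fin n → ℝ) : Prop :=
  ∃ (Λ : Matrix (Fin n) (Fin n) ℝ) (ω2 ω3 : Fin n → ℝ),
    Supported E Λ ∧ (∀ i, 0 < ω2 i) ∧ S = momentS Λ ω2 ∧ T = momentT Λ ω3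

/-- The third-order moment (vanishing) ideal `I^{≤3}(G)`. -/
noncomputable def momentIdeal (E : Fin n → Fin n → Prop) : Ideal (MvPolynomial (MomVar n) ℝ) where
  carrier := {f | ∀ S T, MomentModel E S T → eval (evalVar S T) f = 0}
  add_mem' := by
    intro f g hf hg S T h
    simp [map_add, hf S T h, hg S T h]
  zero_mem' := by
    intro S T h
    simp
  smul_mem' := by
    intro c f hf S T h
    simp [smul_eq_mul, _root_.map_mul, hf S T h]

/-- A fully symmetric 3-tensor. -/
def SymTensor3 (T : Fin n → Fin n → Fin n → ℝ) : Prop :=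
  ∀ i j k : Fin n, T i j k = T j i k ∧ T i j k = T i k j

/-! ### Trek matrices and their minors -/

/-- `top(i,k) = top(j,k)`: there is a common vertex `v` that is the top of the
simple 2-treks between `i,k` and between `j,k`. -/
def SameTop2 (E : Fin n → Fin n → Prop) (i j k : Fin n) : Prop :=
  ∃ v, (∃ p q, IsSimpleTrek2 E v p q i k) ∧ (∃ p q, IsSimpleTrek2 E v p q j k)

/-- `top(i,l,m) = top(j,l,m)`. -/
def SameTop3 (E : Fin n → Fin n → Prop) (i j l m : Fin n) : Prop :=
  ∃ v, (∃ p q r, IsSimpleTrek3 E v p q r i l m) ∧ (∃ p q r, IsSimpleTrek3 E v p q r j l m)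

/-- `f` is a `2 × 2` minor of the trek-matrix `A_{i,j}`. -/
def IsTrekMinorOf (E : Fin n → Fin n → Prop) (i j : Fin n)
    (f : MvPolynomial (MomVar n) ℝ) : Prop :=
  (∃ k k', SameTop2 E i j k ∧ SameTop2 E i j k' ∧
      f = svar i k * svar j k' - svar j k * svar i k') ∨
  (∃ k l m, SameTop2 E i j k ∧ SameTop3 E i j l m ∧
      f = svar i k * tvar j l m - svar j k * tvar i l m) ∨
  (∃ l m l' m', SameTop3 E i j l m ∧ SameTop3 E i j l' m' ∧
      f = tvar i l m * tvar j l' m' - tvar j l m * tvar i l' m')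

/-- Variables `s_{ij}` with no 2-trek between `i,j` and `t_{ijk}` with no 3-trek. -/
def noTrekVars (E : Fin n → Fin n → Prop) : Set (MvPolynomial (MomVar n) ℝ) :=
  {f | (∃ i j, ¬ Trek2Exists E i j ∧ f = svar i j) ∨
       (∃ i j k, ¬ Trek3Exists E i j k ∧ f = tvar i j k)}

/-- The 2-minors of the trek-matrices `A_{i,j}` over edges `i → j` of `G`. -/
def edgeMinors (E : Fin n → Fin n → Prop) : Set (MvPolynomial (MomVar n) ℝ) :=
  {f | ∃ i j, E i j ∧ IsTrekMinorOf E i j f}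

/-- The 2-minors of all trek-matrices `A_{i,j}`. -/
def allMinors (E : Fin n → Fin n → Prop) : Set (MvPolynomial (MomVar n) ℝ) :=
  {f | ∃ i j, Trek2Exists E i j ∧ IsTrekMinorOf E i j f}

/-! ### The simple trek rule parametrization -/

/-- Product of the edge weights `w` along a path. -/
def pathProd {R : Type*} [CommSemiring R] (w : Fin n → Fin n → R) : List (Fin n) → R
  | [] => 1
  | [_] => 1
  | a :: b :: l => w a b * pathProd w (b :: l)

/-- Sum of a weight over all simple 2-treks between `i` and `j`. -/
noncomputable def trekSum2 {M : Type*} [AddCommMonoid M] (E : Fin n → Fin n → Prop)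
    (wt : Fin n → List (Fin n) → List (Fin n) → M) (i j : Fin n) : M :=
  ∑ᶠ τ : {x : Fin n × List (Fin n) × List (Fin n) //
      IsSimpleTrek2 E x.1 x.2.1 x.2.2 i j}, wt τ.1.1 τ.1.2.1 τ.1.2.2

/-- Sum of a weight over all simple 3-treks between `i`, `j` and `k`. -/
noncomputable def trekSum3 {M : Type*} [AddCommMonoid M] (E : Fin n → Fin n → Prop)
    (wt : Fin n → List (Fin n) → List (Fin n) → List (Fin n) → M) (i j k : Fin n) : M :=
  ∑ᶠ τ : {x : Fin n × List (Fin n) × List (Fin n) × List (Fin n) //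
      IsSimpleTrek3 E x.1 x.2.1 x.2.2.1 x.2.2.2 i j k},
    wt τ.1.1 τ.1.2.1 τ.1.2.2.1 τ.1.2.2.2

/-- The `(i,j)` coordinate of the simple trek rule parametrization `φ_G^*` (covariances). -/
noncomputable def phiS (E : Fin n → Fin n → Prop) (a : Fin n → ℝ)
    (Λ : Matrix (Fin n) (Fin n) ℝ) (i j : Fin n) : ℝ :=
  trekSum2 E (fun v p q => a v * (pathProd (fun x y => Λ x y) p * pathProd (fun x y => Λ x y) q)) i j

/-- The `(i,j,k)` coordinate of the simple trek rule parametrization `φ_G^*` (third moments). -/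
noncomputable def phiT (E : Fin n → Fin n → Prop) (b : Fin n → ℝ)
    (Λ : Matrix (Fin n) (Fin n) ℝ) (i j k : Fin n) : ℝ :=
  trekSum3 E (fun v p q r => b v * (pathProd (fun x y => Λ x y) p *
    pathProd (fun x y => Λ x y) q * pathProd (fun x y => Λ x y) r)) i j k

/-- The ring homomorphism `φ_G` of the simple trek rule. -/
noncomputable def phiG (E : Fin n → Fin n → Prop) :
    MvPolynomial (MomVar n) ℝ →ₐ[ℝ] MvPolynomial (PVar n) ℝ :=
  aeval fun v => match v with
    | Sum.inl p => trekSum2 E (fun v' pl ql =>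
        X (Sum.inl (Sum.inl v')) * (pathProd (fun x y => X (Sum.inr (x, y))) pl *
          pathProd (fun x y => X (Sum.inr (x, y))) ql)) p.1.1 p.1.2
    | Sum.inr p => trekSum3 E (fun v' pl ql rl =>
        X (Sum.inl (Sum.inr v')) * (pathProd (fun x y => X (Sum.inr (x, y))) pl *
          pathProd (fun x y => X (Sum.inr (x, y))) ql *
          pathProd (fun x y => X (Sum.inr (x, y))) rl)) p.1.1 p.1.2.1 p.1.2.2

variable {E : Fin n → Fin n → Prop}

section Paths

lemma IsPathFromTo.singleton (a : Fin n) : IsPathFromTo E a [a] a :=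
  ⟨trivial, rfl, rfl⟩

lemma IsPathFromTo.cons {a b i : Fin n} {p : List (Fin n)} (hab : E a b)
    (hp : IsPathFromTo E b p i) : IsPathFromTo E a (a :: p) i := by
  obtain ⟨hdp, hhd, hlast⟩ := hp
  cases p with
  | nil => simp at hhd
  | cons c t =>
    obtain rfl : c = b := by simpa using hhd
    exact ⟨⟨hab, hdp⟩, rfl, by simpa [List.getLast?_cons_cons] using hlast⟩

end Paths

section SortedIndices

lemma trek2Exists_of_min_max {i j : Fin n} (h : Trek2Exists E (min i j) (max i j)) :
    Trek2Exists E i j := by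
  rcases le_total i j with hij | hij
  · simpa [min_eq_left hij, max_eq_right hij] using h
  · obtain ⟨v, p, q, hp, hq⟩ := h
    rw [min_eq_right hij] at hp
    rw [max_eq_left hij] at hq
    exact ⟨v, q, p, hq, hp⟩

lemma eq_min3_or_eq_mid3_or_eq_max3 {i j k x : Fin n} (hx : x = i ∨ x = j ∨ x = k) :
    x = min i (min j k) ∨ x = mid3 i j k ∨ x = max i (max j k) := by
  rcases le_total i j with hij | hij <;> rcases le_total j k with hjk | hjk <;>
    rcases le_total i k with hik | hik <;>
    rcases hx with rfl | rfl | rfl <;>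
    simp [mid3, *] <;> omega

lemma trek3Exists_of_sorted {i j k : Fin n}
    (h : Trek3Exists E (min i (min j k)) (mid3 i j k) (max i (max j k))) :
    Trek3Exists E i j k := by
  obtain ⟨v, p, q, r, hp, hq, hr⟩ := h
  have reach : ∀ x, x = i ∨ x = j ∨ x = k → ∃ p, IsPathFromTo E v p x := fun x hx => by
    rcases eq_min3_or_eq_mid3_or_eq_max3 hx with rfl | rfl | rfl
    exacts [⟨p, hp⟩, ⟨q, hq⟩, ⟨r, hr⟩]
  obtain ⟨p, hp⟩ := reach i (by simp)
  obtain ⟨q, hq⟩ := reach j (by simp)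
  obtain ⟨r, hr⟩ := reach k (by simp)
  exact ⟨v, p, q, r, hp, hq, hr⟩

end SortedIndices

section Nilpotent

lemma pow_apply_eq_zero_of_lt_add {R : Type*} [Semiring R] {Λ : Matrix (Fin n) (Fin n) R}
    (hΛ : ∀ a b, b ≤ a → Λ a b = 0) (k : ℕ) {a i : Fin n} (h : i.val < a.val + k) :
    (Λ ^ k) a i = 0 := by
  induction k generalizing a with
  | zero => exact one_apply_ne (by rintro rfl; omega)
  | succ k ih =>
    rw [pow_succ', mul_apply]
    refine sum_eq_zero fun b _ => ?_
    rcases le_or_gt b a with hba | hab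
    · rw [hΛ a b hba, zero_mul]
    · rw [ih (by omega), mul_zero]

lemma pow_card_eq_zero {R : Type*} [Semiring R] {Λ : Matrix (Fin n) (Fin n) R}
    (hΛ : ∀ a b, b ≤ a → Λ a b = 0) : Λ ^ n = 0 := by
  ext a i
  exact pow_apply_eq_zero_of_lt_add hΛ n (by omega)

lemma inv_one_sub_eq_sum_pow {m R : Type*} [Fintype m] [DecidableEq m] [CommRing R]
    {N : Matrix m m R} {k : ℕ} (hN : N ^ k = 0) : (1 - N)⁻¹ = ∑ i ∈ range k, N ^ i :=
  inv_eq_left_inv (by rw [geom_sum_mul_neg, hN, sub_zero])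

end Nilpotent

section Support

variable {Λ : Matrix (Fin n) (Fin n) ℝ}

lemma exists_path_of_pow_apply_ne_zero (hΛ : Supported E Λ) (k : ℕ) {a i : Fin n}
    (h : (Λ ^ k) a i ≠ 0) : ∃ p, IsPathFromTo E a p i := by
  induction k generalizing a with
  | zero =>
    obtain rfl : a = i := by
      by_contra hne
      exact h (one_apply_ne hne)
    exact ⟨_, .singleton a⟩
  | succ k ih =>
    rw [pow_succ', mul_apply] at h
    obtain ⟨b, -, hb⟩ := exists_ne_zero_of_sum_ne_zero h
    have hab : E a b := by_contra fun hab => left_ne_zero_of_mul hb (hΛ a b hab)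
    obtain ⟨p, hp⟩ := ih (right_ne_zero_of_mul hb)
    exact ⟨_, hp.cons hab⟩

lemma exists_path_of_inv_one_sub_apply_ne_zero (hlt : ∀ a b, E a b → a < b)
    (hΛ : Supported E Λ) {a i : Fin n} (h : (1 - Λ)⁻¹ a i ≠ 0) :
    ∃ p, IsPathFromTo E a p i := by
  have hupper : ∀ a b, b ≤ a → Λ a b = 0 := fun a b hba =>
    hΛ a b fun hab => (hlt a b hab).not_ge hba
  rw [inv_one_sub_eq_sum_pow (pow_card_eq_zero hupper), Matrix.sum_apply] at h
  obtain ⟨k, -, hk⟩ := exists_ne_zero_of_sum_ne_zero h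
  exact exists_path_of_pow_apply_ne_zero hΛ k hk

lemma momentS_apply_eq_zero_of_not_trek2Exists (hlt : ∀ a b, E a b → a < b)
    (hΛ : Supported E Λ) (ω2 : Fin n → ℝ) {i j : Fin n} (h : ¬ Trek2Exists E i j) :
    momentS Λ ω2 i j = 0 := by
  rw [momentS, mul_apply]
  refine sum_eq_zero fun b _ => ?_
  rw [mul_diagonal, transpose_apply]
  by_contra hb
  obtain ⟨p, hp⟩ := exists_path_of_inv_one_sub_apply_ne_zero hlt hΛ
    (left_ne_zero_of_mul (left_ne_zero_of_mul hb))
  obtain ⟨q, hq⟩ := exists_path_of_inv_one_sub_apply_ne_zero hlt hΛ (right_ne_zero_of_mul hb)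
  exact h ⟨b, p, q, hp, hq⟩

lemma momentT_apply_eq_zero_of_not_trek3Exists (hlt : ∀ a b, E a b → a < b)
    (hΛ : Supported E Λ) (ω3 : Fin n → ℝ) {i j k : Fin n} (h : ¬ Trek3Exists E i j k) :
    momentT Λ ω3 i j k = 0 := by
  refine sum_eq_zero fun a _ => ?_
  by_contra ha
  obtain ⟨p, hp⟩ := exists_path_of_inv_one_sub_apply_ne_zero hlt hΛ
    (right_ne_zero_of_mul (left_ne_zero_of_mul (left_ne_zero_of_mul ha)))
  obtain ⟨q, hq⟩ := exists_path_of_inv_one_sub_apply_ne_zero hlt hΛ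
    (right_ne_zero_of_mul (left_ne_zero_of_mul ha))
  obtain ⟨r, hr⟩ := exists_path_of_inv_one_sub_apply_ne_zero hlt hΛ (right_ne_zero_of_mul ha)
  exact h ⟨a, p, q, r, hp, hq, hr⟩

end Support

lemma eval_svar (S : Matrix (Fin n) (Fin n) ℝ) (T : Fin n → Fin n → Fin n → ℝ) (i j : Fin n) :
    eval (evalVar S T) (svar i j) = S (min i j) (max i j) := by
  simp [svar, evalVar]

lemma eval_tvar (S : Matrix (Fin n) (Fin n) ℝ) (T : Fin n → Fin n → Fin n → ℝ) (i j k : Fin n) :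
    eval (evalVar S T) (tvar i j k) = T (min i (min j k)) (mid3 i j k) (max i (max j k)) := by
  simp [tvar, evalVar]

/-- If there is no 2-trek between `i` and `j` then `s_{ij} ∈ I^{≤3}(G)`,
and for every `k` with no 3-trek between `i,j,k`, also `t_{ijk} ∈ I^{≤3}(G)`. -/
theorem no_trek_vars_mem (n : ℕ) (E : Fin n → Fin n → Prop) (hG : IsPolytree E)
    (i j : Fin n) (h2 : ¬ Trek2Exists E i j) :
    svar i j ∈ momentIdeal E ∧
      ∀ k : Fin n, ¬ Trek3Exists E i j k → tvar i j k ∈ momentIdeal E := by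
  constructor
  · rintro S T ⟨Λ, ω2, ω3, hΛ, -, rfl, rfl⟩
    rw [eval_svar]
    exact momentS_apply_eq_zero_of_not_trek2Exists hG.1 hΛ ω2 (mt trek2Exists_of_min_max h2)
  · rintro k h3 S T ⟨Λ, ω2, ω3, hΛ, -, rfl, rfl⟩
    rw [eval_tvar]
    exact momentT_apply_eq_zero_of_not_trek3Exists hG.1 hΛ ω3 (mt trek3Exists_of_sorted h3)

end LNG
end

section
/- Let G be a DAG with an upstream partition V=H∪O of its vertices. Endow ℝ[a_i,b_i,λ_{ij}] with the ℤ²-multigrading deg a_h=(1,1) for h∈H, deg a_o=(1,3) for o∈O, deg b_h=(1,0) for h∈H, deg b_o=(1,3) for o∈O, deg λ_{ho}=(0,1) for h∈H, o∈O, and deg λ_{ij}=(0,0) for all other edges. Then each image φ_G(s_{ij}) is homogeneous of multidegree (1, 1+c), where c is the number of elements of the multiset {i,j} lying in O, and each image φ_G(t_{ijk}) is homogeneous of multidegree (1, c'), where c' is the number of elements of the multiset {i,j,k} lying in O; hence the multigrading descends to ℝ[s_{ij},t_{ijk}] with these degrees. -/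
open MvPolynomial Matrix Finset

namespace LNG

variable {n : ℕ}

/-- The ℤ²-multigrading on the parameter ring associated to an upstream partition
`V = H ∪ O` (here `H = Oᶜ`): `deg a_h = (1,1)`, `deg a_o = (1,3)`, `deg b_h = (1,0)`,
`deg b_o = (1,3)`, `deg λ_{ho} = (0,1)` and `deg λ_{ij} = (0,0)` otherwise. -/
def wdeg (O : Set (Fin n)) [DecidablePred (· ∈ O)] : PVar n → ℕ × ℕ
  | Sum.inl (Sum.inl i) => if i ∈ O then (1, 3) else (1, 1)
  | Sum.inl (Sum.inr i) => if i ∈ O then (1, 3) else (1, 0)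
  | Sum.inr p => if p.1 ∉ O ∧ p.2 ∈ O then (0, 1) else (0, 0)


section UpstreamGrading

variable {E : Fin n → Fin n → Prop} {O : Set (Fin n)}

theorem IsPathFromTo.mem_of_mem (hup : ∀ i j : Fin n, E i j → i ∈ O → j ∈ O) :
    ∀ {p : List (Fin n)} {v i : Fin n}, IsPathFromTo E v p i → v ∈ O → i ∈ O
  | [], _, _, h, _ => h.1.elim
  | [_], _, _, ⟨_, rfl, rfl⟩, hv => hv
  | _ :: b :: _, _, _, ⟨⟨hab, hd⟩, rfl, hlast⟩, hv =>
    mem_of_mem hup (p := b :: _) ⟨hd, rfl, hlast⟩ (hup _ _ hab hv)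

variable [DecidablePred (· ∈ O)]

/-- Along a path the partition can only be crossed from `H` into `O`, and at most once, so
the `λ`-monomial of a path from `v` to `i` has degree `(0, 1)` exactly when `v ∈ H` and
`i ∈ O`. -/
theorem isWeightedHomogeneous_pathProd (hup : ∀ i j : Fin n, E i j → i ∈ O → j ∈ O) :
    ∀ {p : List (Fin n)} {v i : Fin n}, IsPathFromTo E v p i →
      IsWeightedHomogeneous (wdeg O)
        (pathProd (fun x y => (X (Sum.inr (x, y)) : MvPolynomial (PVar n) ℝ)) p)
        ((0, if v ∉ O ∧ i ∈ O then 1 else 0) : ℕ × ℕ)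
  | [], _, _, h => h.1.elim
  | [_], _, _, ⟨_, rfl, rfl⟩ => by
    simpa [pathProd, Prod.mk_zero_zero] using isWeightedHomogeneous_one ℝ (wdeg O)
  | a :: b :: l, _, i, ⟨⟨hab, hd⟩, rfl, hlast⟩ => by
    have htail : IsPathFromTo E b (b :: l) i := ⟨hd, rfl, hlast⟩
    rw [pathProd]
    convert (isWeightedHomogeneous_X ℝ (wdeg O) (Sum.inr (a, b))).mul
      (isWeightedHomogeneous_pathProd hup htail) using 1
    by_cases hb : b ∈ O
    · have hi := htail.mem_of_mem hup hb
      by_cases ha : a ∈ O <;> simp [wdeg, ha, hb, hi]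
    · have ha : a ∉ O := fun ha => hb (hup _ _ hab ha)
      simp [wdeg, ha, hb]

theorem isWeightedHomogeneous_phiG_trekSum2
    (hup : ∀ i j : Fin n, E i j → i ∈ O → j ∈ O) (i j : Fin n) :
    IsWeightedHomogeneous (wdeg O)
      (trekSum2 E (fun v p q => X (Sum.inl (Sum.inl v)) *
        (pathProd (fun x y => X (Sum.inr (x, y))) p *
          pathProd (fun x y => (X (Sum.inr (x, y)) : MvPolynomial (PVar n) ℝ)) q)) i j)
      ((1, 1 + ((if i ∈ O then 1 else 0) + (if j ∈ O then 1 else 0))) : ℕ × ℕ) := by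
  refine finsum_induction (IsWeightedHomogeneous (wdeg O) · _) (isWeightedHomogeneous_zero ℝ _ _)
    (fun _ _ => .add) ?_
  rintro ⟨⟨v, p, q⟩, ⟨hp, hq⟩, -⟩
  convert (isWeightedHomogeneous_X ℝ (wdeg O) (Sum.inl (Sum.inl v))).mul
    ((isWeightedHomogeneous_pathProd hup hp).mul (isWeightedHomogeneous_pathProd hup hq)) using 1
  by_cases hv : v ∈ O
  · simp [wdeg, hv, hp.mem_of_mem hup hv, hq.mem_of_mem hup hv]
  · by_cases hi : i ∈ O <;> by_cases hj : j ∈ O <;> simp [wdeg, hv, hi, hj]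

theorem isWeightedHomogeneous_phiG_trekSum3
    (hup : ∀ i j : Fin n, E i j → i ∈ O → j ∈ O) (i j k : Fin n) :
    IsWeightedHomogeneous (wdeg O)
      (trekSum3 E (fun v p q r => X (Sum.inl (Sum.inr v)) *
        (pathProd (fun x y => X (Sum.inr (x, y))) p *
          pathProd (fun x y => X (Sum.inr (x, y))) q *
          pathProd (fun x y => (X (Sum.inr (x, y)) : MvPolynomial (PVar n) ℝ)) r)) i j k)
      ((1, (if i ∈ O then 1 else 0) + (if j ∈ O then 1 else 0) +
        (if k ∈ O then 1 else 0)) : ℕ × ℕ) := by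
  refine finsum_induction (IsWeightedHomogeneous (wdeg O) · _) (isWeightedHomogeneous_zero ℝ _ _)
    (fun _ _ => .add) ?_
  rintro ⟨⟨v, p, q, r⟩, ⟨hp, hq, hr⟩, -⟩
  convert (isWeightedHomogeneous_X ℝ (wdeg O) (Sum.inl (Sum.inr v))).mul
    (((isWeightedHomogeneous_pathProd hup hp).mul (isWeightedHomogeneous_pathProd hup hq)).mul
      (isWeightedHomogeneous_pathProd hup hr)) using 1
  by_cases hv : v ∈ O
  · simp [wdeg, hv, hp.mem_of_mem hup hv, hq.mem_of_mem hup hv, hr.mem_of_mem hup hv]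
  · by_cases hi : i ∈ O <;> by_cases hj : j ∈ O <;> by_cases hk : k ∈ O <;>
      simp [wdeg, hv, hi, hj, hk]

end UpstreamGrading

theorem apply_min_add_apply_max {α M : Type*} [LinearOrder α] [AddCommMagma M] (g : α → M)
    (i j : α) :
    g (min i j) + g (max i j) = g i + g j := by
  rcases le_total i j with h | h
  · rw [min_eq_left h, max_eq_right h]
  · rw [min_eq_right h, max_eq_left h, add_comm]

theorem apply_min_add_apply_mid3_add_apply_max {M : Type*} [AddCommMonoid M] (g : Fin n → M)
    (i j k : Fin n) :
    g (min i (min j k)) + g (mid3 i j k) + g (max i (max j k)) = g i + g j + g k := by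
  simp only [mid3, min_def, max_def, Fin.le_def]
  split_ifs <;> first | abel1 | (exfalso; omega)

theorem upstream_grading_general (n : ℕ) (E : Fin n → Fin n → Prop)
    (O : Set (Fin n)) [DecidablePred (· ∈ O)]
    (hup : ∀ i j : Fin n, E i j → i ∈ O → j ∈ O) :
    (∀ i j : Fin n,
      IsWeightedHomogeneous (wdeg O) (phiG E (svar i j))
        ((1, 1 + ((if i ∈ O then 1 else 0) + (if j ∈ O then 1 else 0))) : ℕ × ℕ)) ∧
    (∀ i j k : Fin n,
      IsWeightedHomogeneous (wdeg O) (phiG E (tvar i j k))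
        ((1, (if i ∈ O then 1 else 0) + (if j ∈ O then 1 else 0) +
          (if k ∈ O then 1 else 0)) : ℕ × ℕ)) := by
  constructor
  · intro i j
    have h := isWeightedHomogeneous_phiG_trekSum2 hup (min i j) (max i j)
    rw [apply_min_add_apply_max (fun x => if x ∈ O then 1 else 0)] at h
    simpa [phiG, svar] using h
  · intro i j k
    have h := isWeightedHomogeneous_phiG_trekSum3 hup (min i (min j k)) (mid3 i j k)
      (max i (max j k))
    rw [apply_min_add_apply_mid3_add_apply_max (fun x => if x ∈ O then 1 else 0)] at h
    simpa [phiG, tvar] using h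

/-- For a DAG with an upstream partition, `φ_G(s_{ij})` is homogeneous
of multidegree `(1, 1 + #({i,j} ∩ O))` and `φ_G(t_{ijk})` is homogeneous of multidegree
`(1, #({i,j,k} ∩ O))` (multisets counted with multiplicity). -/
theorem upstream_grading (n : ℕ) (E : Fin n → Fin n → Prop)
    (hE : ∀ i j : Fin n, E i j → i < j)
    (O : Set (Fin n)) [DecidablePred (· ∈ O)]
    (hup : ∀ i j : Fin n, E i j → i ∈ O → j ∈ O) :
    (∀ i j : Fin n,
      IsWeightedHomogeneous (wdeg O) (phiG E (svar i j))
        ((1, 1 + ((if i ∈ O then 1 else 0) + (if j ∈ O then 1 else 0))) : ℕ × ℕ)) ∧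
    (∀ i j k : Fin n,
      IsWeightedHomogeneous (wdeg O) (phiG E (tvar i j k))
        ((1, (if i ∈ O then 1 else 0) + (if j ∈ O then 1 else 0) +
          (if k ∈ O then 1 else 0)) : ℕ × ℕ)) :=
  upstream_grading_general n E O hup

end LNG
end

section
/- Let G=(V,E) be a polytree and let (z,y)∈ℝ^{|V|+|E|} satisfy: z_l ≥ 0 for all l∈V; y_{lm} > 0 for all (l,m)∈E; Σ_{l∈V} z_l = 1; 2z_l + Σ_{h∈pa(l)} y_{hl} − y_{lm} ≥ 0 for every edge (l,m)∈E; and 3z_l + Σ_{h∈pa(l)} y_{hl} − Σ_{m∈ch(l)} y_{lm} ≥ 0 for every l∈V. Then for each vertex l there is at most one child m∈ch(l) for which the equality 2z_l + Σ_{h∈pa(l)} y_{hl} − y_{lm} = 0 holds (i.e., at most one outgoing "marked" edge). -/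
open MvPolynomial Matrix Finset

namespace LNG

variable {n : ℕ}

theorem add_le_sum_of_ne {ι M : Type*} [AddCommMonoid M] [PartialOrder M]
    [IsOrderedAddMonoid M] {s : Finset ι} {f : ι → M} (hf : ∀ k ∈ s, 0 ≤ f k) {i j : ι}
    (hi : i ∈ s) (hj : j ∈ s) (hij : i ≠ j) : f i + f j ≤ ∑ k ∈ s, f k := by
  classical
  rw [← sum_pair hij]
  exact sum_le_sum_of_subset_of_nonneg (by simp [insert_subset_iff, hi, hj])
    fun k hk _ => hf k hk

theorem at_most_one_marked_edge_general (n : ℕ) (E : Fin n → Fin n → Prop) [DecidableRel E]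
    (z : Fin n → ℝ) (y : Fin n → Fin n → ℝ)
    (hy : ∀ l m, E l m → 0 < y l m)
    (h5 : ∀ l, 0 ≤ 3 * z l + (∑ h ∈ Finset.univ.filter (fun h => E h l), y h l)
      - ∑ m ∈ Finset.univ.filter (fun m => E l m), y l m)
    (l m m' : Fin n) (hm : E l m) (hm' : E l m')
    (heq : 2 * z l + (∑ h ∈ Finset.univ.filter (fun h => E h l), y h l) - y l m = 0)
    (heq' : 2 * z l + (∑ h ∈ Finset.univ.filter (fun h => E h l), y h l) - y l m' = 0) :
    m = m' := by
  by_contra hne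
  have hin : 0 ≤ ∑ h ∈ univ.filter (fun h => E h l), y h l :=
    sum_nonneg fun h hh => (hy h l (mem_filter.1 hh).2).le
  have hout : y l m + y l m' ≤ ∑ k ∈ univ.filter (fun k => E l k), y l k :=
    add_le_sum_of_ne (fun k hk => (hy l k (mem_filter.1 hk).2).le)
      (mem_filter.2 ⟨mem_univ _, hm⟩) (mem_filter.2 ⟨mem_univ _, hm'⟩) hne
  -- With `S` the inflow, two marked edges carry `4 z_l + 2 S` against the cap `3 z_l + S`,
  -- so `z_l + S ≤ 0` and `y_{lm} = 2 z_l + S ≤ -S ≤ 0`.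
  linarith [h5 l, hy l m hm]

/-- Claim 1. If `(z,y)` satisfies the defining inequalities of `Q_G`
with all edge coordinates strictly positive, then every vertex has at most one outgoing
marked edge. -/
theorem at_most_one_marked_edge (n : ℕ) (E : Fin n → Fin n → Prop) [DecidableRel E]
    (hG : IsPolytree E) (z : Fin n → ℝ) (y : Fin n → Fin n → ℝ)
    (hz : ∀ l, 0 ≤ z l)
    (hy : ∀ l m, E l m → 0 < y l m)
    (hsum : (∑ l, z l) = 1)
    (h4 : ∀ l m, E l m →
      0 ≤ 2 * z l + (∑ h ∈ Finset.univ.filter (fun h => E h l), y h l) - y l m)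
    (h5 : ∀ l, 0 ≤ 3 * z l + (∑ h ∈ Finset.univ.filter (fun h => E h l), y h l)
      - ∑ m ∈ Finset.univ.filter (fun m => E l m), y l m)
    (l m m' : Fin n) (hm : E l m) (hm' : E l m')
    (heq : 2 * z l + (∑ h ∈ Finset.univ.filter (fun h => E h l), y h l) - y l m = 0)
    (heq' : 2 * z l + (∑ h ∈ Finset.univ.filter (fun h => E h l), y h l) - y l m' = 0) :
    m = m' :=
  at_most_one_marked_edge_general n E z y hy h5 l m m' hm hm' heq heq'

end LNG
end
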